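/- arXiv:2402.03605 — 5 statements merged into one kernel-verified Lean document; each statement's English description precedes it below -/
import Mathlib

section
/- For unit vectors Ψ, Ω in a complex Hilbert space spanning a subspace K, the operator U = ⟨Ω,Ψ⟩·1 - |Ψ⟩⟨Ω| + |Ω⟩⟨Ψ| on K is unitary. -/
/-- For unit vectors Ψ, Ω spanning K, the operator
`U = ⟨Ω,Ψ⟩·1 - |Ψ⟩⟨Ω| + |Ω⟩⟨Ψ|` restricts to a unitary on K:
it leaves K invariant, is isometric on K, and maps K onto K. -/
theorem stmt1 {H : Type*} [NormedAddCommGroup H] [InnerProductSpace ℂ H]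
    (Ψ Ω : H) (hΨ : ‖Ψ‖ = 1) (hΩ : ‖Ω‖ = 1)
    (K : Submodule ℂ H) (hK : K = Submodule.span ℂ {Ψ, Ω})
    (U : H →ₗ[ℂ] H)
    (hU : ∀ Φ : H, U Φ =
      (inner ℂ Ω Ψ : ℂ) • Φ - (inner ℂ Ω Φ : ℂ) • Ψ + (inner ℂ Ψ Φ : ℂ) • Ω) :
    (∀ x ∈ K, U x ∈ K) ∧ (∀ x ∈ K, ‖U x‖ = ‖x‖) ∧ (∀ y ∈ K, ∃ x ∈ K, U x = y) := by
  have hΨΨ : (inner ℂ Ψ Ψ : ℂ) = 1 := by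
    rw [inner_self_eq_norm_sq_to_K, hΨ]; norm_num
  have hΩΩ : (inner ℂ Ω Ω : ℂ) = 1 := by
    rw [inner_self_eq_norm_sq_to_K, hΩ]; norm_num
  have hconj : (inner ℂ Ψ Ω : ℂ) = starRingEnd ℂ (inner ℂ Ω Ψ : ℂ) := by
    rw [inner_conj_symm]
  subst hK
  refine ⟨?_, ?_, ?_⟩
  · intro x hx
    obtain ⟨c, d, rfl⟩ := Submodule.mem_span_pair.mp hx
    rw [hU]
    apply Submodule.mem_span_pair.mpr
    refine ⟨-d, c + d * ((inner ℂ Ω Ψ : ℂ) + starRingEnd ℂ (inner ℂ Ω Ψ : ℂ)), ?_⟩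
    simp only [inner_add_right, inner_smul_right, hΨΨ, hΩΩ, hconj]
    module
  · intro x hx
    obtain ⟨c, d, rfl⟩ := Submodule.mem_span_pair.mp hx
    have key : (inner ℂ (U (c•Ψ+d•Ω)) (U (c•Ψ+d•Ω)) : ℂ)
        = inner ℂ (c•Ψ+d•Ω) (c•Ψ+d•Ω) := by
      rw [hU]
      simp only [inner_add_right, inner_add_left, inner_smul_left, inner_smul_right,
        inner_sub_left, inner_sub_right, hΨΨ, hΩΩ, hconj, map_add, map_mul, map_one,
        RingHomCompTriple.comp_apply, RingHom.id_apply, Complex.conj_conj, mul_one]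
      ring
    have h1 : ‖U (c•Ψ+d•Ω)‖^2 = ‖c•Ψ+d•Ω‖^2 := by
      rw [inner_self_eq_norm_sq_to_K, inner_self_eq_norm_sq_to_K] at key
      exact_mod_cast key
    nlinarith [norm_nonneg (U (c•Ψ+d•Ω)), norm_nonneg (c•Ψ+d•Ω)]
  · intro y hy
    obtain ⟨c, d, rfl⟩ := Submodule.mem_span_pair.mp hy
    refine ⟨(c * ((inner ℂ Ω Ψ : ℂ) + starRingEnd ℂ (inner ℂ Ω Ψ : ℂ)) + d) • Ψ + (-c) • Ω,
      Submodule.mem_span_pair.mpr ⟨_, _, rfl⟩, ?_⟩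
    rw [hU]
    simp only [inner_add_right, inner_smul_right, hΨΨ, hΩΩ, hconj, mul_one]
    module
end

section
/- For unit vectors Ψ, Ω spanning a subspace K, the operator U = ⟨Ω,Ψ⟩·1 - |Ψ⟩⟨Ω| + |Ω⟩⟨Ψ| on K satisfies ‖1 - U‖ = ‖Ψ - Ω‖. -/
/-- For unit vectors Ψ, Ω spanning K, the operator
`U = ⟨Ω,Ψ⟩·1 - |Ψ⟩⟨Ω| + |Ω⟩⟨Ψ|` on K satisfies `‖1 - U‖ = ‖Ψ - Ω‖`
(operator norm on K). -/
theorem stmt2 {H : Type*} [NormedAddCommGroup H] [InnerProductSpace ℂ H]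
    (Ψ Ω : H) (hΨ : ‖Ψ‖ = 1) (hΩ : ‖Ω‖ = 1)
    (K : Submodule ℂ H) (hK : K = Submodule.span ℂ {Ψ, Ω})
    (V : K →L[ℂ] K)
    (hV : ∀ x : K, (V x : H) =
      (inner ℂ Ω Ψ : ℂ) • (x : H) - (inner ℂ Ω (x : H) : ℂ) • Ψ + (inner ℂ Ψ (x : H) : ℂ) • Ω) :
    ‖ContinuousLinearMap.id ℂ K - V‖ = ‖Ψ - Ω‖ := by
  have hΨK : Ψ ∈ K := hK ▸ Submodule.subset_span (Set.mem_insert _ _)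
  set s : ℂ := (inner ℂ Ω Ψ : ℂ) with hs
  set c : ℝ := ‖Ψ - Ω‖ with hc
  set T := ContinuousLinearMap.id ℂ K - V with hT
  have hns : ∀ y : H, (inner ℂ y y : ℂ) = ((‖y‖ : ℝ) : ℂ) ^ 2 := fun y => by
    exact_mod_cast inner_self_eq_norm_sq_to_K (𝕜 := ℂ) y
  have hΨΨ : (inner ℂ Ψ Ψ : ℂ) = 1 := by
    rw [hns, hΨ]; norm_num
  have hΩΩ : (inner ℂ Ω Ω : ℂ) = 1 := by
    rw [hns, hΩ]; norm_num
  have hΨΩ : (inner ℂ Ψ Ω : ℂ) = starRingEnd ℂ s := (inner_conj_symm Ψ Ω).symm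
  have hc2 : (c : ℂ) ^ 2 = 2 - s - starRingEnd ℂ s := by
    rw [hc, ← hns]
    simp only [inner_sub_left, inner_sub_right, hΨΨ, hΩΩ, hΨΩ, ← hs]
    ring
  -- key pointwise identity
  have key : ∀ x : K, ‖T x‖ = c * ‖x‖ := by
    intro x
    have hxK : (x : H) ∈ Submodule.span ℂ {Ψ, Ω} := hK ▸ x.2
    obtain ⟨α, β, hx⟩ := Submodule.mem_span_pair.mp hxK
    have hTx : ((T x : K) : H) = (x : H) - (V x : H) := by
      simp [hT, ContinuousLinearMap.sub_apply]
    have hiΩ : (inner ℂ Ω (x : H) : ℂ) = α * s + β := by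
      rw [← hx]
      simp only [inner_add_right, inner_smul_right, hΩΩ, ← hs]
      ring
    have hiΨ : (inner ℂ Ψ (x : H) : ℂ) = α + β * starRingEnd ℂ s := by
      rw [← hx]
      simp only [inner_add_right, inner_smul_right, hΨΨ, hΨΩ]
      ring
    have hTx2 : ((T x : K) : H) = (α + β) • Ψ + (-α + (1 - s - starRingEnd ℂ s) * β) • Ω := by
      rw [hTx, hV x, hiΩ, hiΨ, ← hx]
      module
    have hx2 : ((x : H)) = α • Ψ + β • Ω := hx.symm
    have hinner : (inner ℂ ((T x : K) : H) ((T x : K) : H) : ℂ)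
        = ((c : ℂ) ^ 2) * (inner ℂ (x : H) (x : H) : ℂ) := by
      rw [hTx2, hc2]
      conv_rhs => rw [hx2]
      simp only [inner_add_left, inner_add_right, inner_smul_left, inner_smul_right,
        hΨΨ, hΩΩ, hΨΩ, ← hs, map_add, map_mul, map_sub, map_one, map_neg, Complex.conj_conj,
        Complex.conj_ofReal]
      ring
    have h1 : ((‖T x‖ : ℂ)) ^ 2 = ((c : ℂ) * (‖x‖ : ℂ)) ^ 2 := by
      rw [← Submodule.norm_coe (T x), ← hns, hinner, hns, Submodule.norm_coe]
      ring
    have h2 : ‖T x‖ ^ 2 = (c * ‖x‖) ^ 2 := by exact_mod_cast h1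
    exact (sq_eq_sq₀ (norm_nonneg _) (by positivity)).mp h2
  apply le_antisymm
  · exact T.opNorm_le_bound (norm_nonneg _) fun x => (key x).le
  · have hψ : ‖(⟨Ψ, hΨK⟩ : K)‖ = 1 := by rw [← Submodule.norm_coe]; exact hΨ
    have h := T.unit_le_opNorm (⟨Ψ, hΨK⟩ : K) hψ.le
    rwa [key, hψ, mul_one] at h
end

section
/- If Ψ and Ω are nonzero vectors in a Hilbert space, then ‖Ψ/‖Ψ‖ - Ω/‖Ω‖‖² ≤ ‖Ψ - Ω‖² / (‖Ψ‖·‖Ω‖), with equality if and only if ‖Ψ‖ = ‖Ω‖. -/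
open scoped InnerProductSpace

/-- For nonzero vectors Ψ, Ω in a Hilbert space,
`‖Ψ/‖Ψ‖ - Ω/‖Ω‖‖² ≤ ‖Ψ - Ω‖²/(‖Ψ‖‖Ω‖)`, with equality iff `‖Ψ‖ = ‖Ω‖`. -/
theorem stmt3 {H : Type*} [NormedAddCommGroup H] [InnerProductSpace ℂ H]
    (Ψ Ω : H) (hΨ : Ψ ≠ 0) (hΩ : Ω ≠ 0) :
    ‖(‖Ψ‖⁻¹ • Ψ) - (‖Ω‖⁻¹ • Ω)‖ ^ 2 ≤ ‖Ψ - Ω‖ ^ 2 / (‖Ψ‖ * ‖Ω‖) ∧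
      (‖(‖Ψ‖⁻¹ • Ψ) - (‖Ω‖⁻¹ • Ω)‖ ^ 2 = ‖Ψ - Ω‖ ^ 2 / (‖Ψ‖ * ‖Ω‖) ↔ ‖Ψ‖ = ‖Ω‖) := by
  have ha : (0:ℝ) < ‖Ψ‖ := norm_pos_iff.mpr hΨ
  have hb : (0:ℝ) < ‖Ω‖ := norm_pos_iff.mpr hΩ
  set a := ‖Ψ‖ with ha'
  set b := ‖Ω‖ with hb'
  set r := RCLike.re (⟪Ψ, Ω⟫_ℂ) with hr
  have hab : (0:ℝ) < a * b := mul_pos ha hb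
  have h1 : ‖(a⁻¹ • Ψ) - (b⁻¹ • Ω)‖ ^ 2 = (2 * (a * b) - 2 * r) / (a * b) := by
    have hre : RCLike.re ⟪a⁻¹ • Ψ, b⁻¹ • Ω⟫_ℂ = a⁻¹ * (b⁻¹ * r) := by
      rw [← algebraMap_smul ℂ a⁻¹ Ψ, ← algebraMap_smul ℂ b⁻¹ Ω,
        RCLike.algebraMap_eq_ofReal, inner_smul_real_left, inner_smul_real_right,
        RCLike.smul_re, RCLike.smul_re, hr]
    rw [@norm_sub_sq ℂ, hre, norm_smul, norm_smul]
    rw [Real.norm_eq_abs, Real.norm_eq_abs, abs_of_pos (inv_pos.mpr ha),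
      abs_of_pos (inv_pos.mpr hb)]
    rw [← ha', ← hb']
    field_simp
    ring
  have h2 : ‖Ψ - Ω‖ ^ 2 = a ^ 2 - 2 * r + b ^ 2 := by
    rw [@norm_sub_sq ℂ]
  rw [h1, h2]
  constructor
  · rw [div_le_div_iff_of_pos_right hab]
    nlinarith [sq_nonneg (a - b)]
  · constructor
    · intro h
      have h3 : 2 * (a * b) - 2 * r = a ^ 2 - 2 * r + b ^ 2 :=
        mul_right_cancel₀ hab.ne' ((div_eq_div_iff hab.ne' hab.ne').mp h)
      have h4 : (a - b) ^ 2 = 0 := by nlinarith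
      have h5 : a - b = 0 := by
        have := sq_eq_zero_iff.mp h4
        exact this
      linarith
    · intro h
      rw [h]
      ring_nf
end

section
/- The unit sphere of an infinite-dimensional Hilbert space is contractible. -/
open Function Metric Set unitInterval

noncomputable section

namespace Stmt11Aux

variable {E : Type*} [NormedAddCommGroup E] [NormedSpace ℝ E]

theorem homotopic_of_interp_ne_zero (F G : C(sphere (0:E) 1, sphere (0:E) 1))
    (h : ∀ (t : I) (x : sphere (0:E) 1),
      (1 - (t:ℝ)) • (F x : E) + (t:ℝ) • (G x : E) ≠ 0) :
    F.Homotopic G := by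
  set v : I × sphere (0:E) 1 → E :=
    fun p => (1 - (p.1:ℝ)) • (F p.2 : E) + (p.1:ℝ) • (G p.2 : E) with hv
  have hvne : ∀ p, v p ≠ 0 := fun p => h p.1 p.2
  have hvcont : Continuous v := by
    apply Continuous.add
    · exact ((continuous_const.sub (continuous_subtype_val.comp continuous_fst))).smul
        (continuous_subtype_val.comp (F.continuous.comp continuous_snd))
    · exact (continuous_subtype_val.comp continuous_fst).smul
        (continuous_subtype_val.comp (G.continuous.comp continuous_snd))
  have hmem : ∀ p, (‖v p‖⁻¹ • v p) ∈ sphere (0:E) 1 := by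
    intro p
    rw [mem_sphere_zero_iff_norm, norm_smul, norm_inv, norm_norm,
      inv_mul_cancel₀ (norm_ne_zero_iff.mpr (hvne p))]
  refine ⟨{ toFun := fun p => ⟨‖v p‖⁻¹ • v p, hmem p⟩
            continuous_toFun := ((hvcont.norm.inv₀
              fun p => norm_ne_zero_iff.mpr (hvne p)).smul hvcont).subtype_mk _
            map_zero_left := ?_
            map_one_left := ?_ }⟩
  · intro x
    apply Subtype.ext
    have h1 : ‖(F x : E)‖ = 1 := mem_sphere_zero_iff_norm.mp (F x).2
    simp [hv, h1]
  · intro x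
    apply Subtype.ext
    have h1 : ‖(G x : E)‖ = 1 := mem_sphere_zero_iff_norm.mp (G x).2
    simp [hv, h1]

end Stmt11Aux

end

noncomputable section

namespace Stmt11Aux

open Function ENNReal

variable {ι : Type*}

/-- extension by zero respects addition -/
theorem extend_add {f : ι → ι} (hf : Injective f) (g g' : ι → ℂ) :
    extend f (g + g') (0 : ι → ℂ) = extend f g 0 + extend f g' 0 := by
  funext j
  rcases em (∃ i, f i = j) with ⟨i, rfl⟩ | h
  · simp [hf.extend_apply]
  · simp [Function.extend_apply' _ _ _ h]

theorem extend_smul {f : ι → ι} (hf : Injective f) (c : ℂ) (g : ι → ℂ) :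
    extend f (c • g) (0 : ι → ℂ) = c • extend f g 0 := by
  funext j
  rcases em (∃ i, f i = j) with ⟨i, rfl⟩ | h
  · simp [hf.extend_apply]
  · simp [Function.extend_apply' _ _ _ h]

theorem extend_norm_rpow {f : ι → ι} (hf : Injective f) (g : ι → ℂ) (q : ℝ) (hq : 0 < q) (j : ι) :
    ‖extend f g (0 : ι → ℂ) j‖ ^ q = extend f (fun i => ‖g i‖ ^ q) (0 : ι → ℝ) j := by
  rcases em (∃ i, f i = j) with ⟨i, rfl⟩ | h
  · rw [hf.extend_apply, hf.extend_apply]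
  · rw [Function.extend_apply' _ _ _ h, Function.extend_apply' _ _ _ h]
    simp [Real.zero_rpow hq.ne']

theorem two_toReal : (2 : ℝ≥0∞).toReal = 2 := by norm_num

/-- The composition (shift) isometry on `ℓ²`. -/
def shiftIso {f : ι → ι} (hf : Injective f) :
    lp (fun _ : ι => ℂ) 2 →ₗᵢ[ℂ] lp (fun _ : ι => ℂ) 2 where
  toFun x := ⟨extend f (⇑x) 0, by
    apply memℓp_gen
    have h1 : (fun j => ‖extend f (⇑x) 0 j‖ ^ (2 : ℝ≥0∞).toReal)
        = extend f (fun i => ‖x i‖ ^ (2 : ℝ≥0∞).toReal) (0 : ι → ℝ) := by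
      funext j; exact extend_norm_rpow hf _ _ (by rw [two_toReal]; norm_num) j
    rw [h1]
    exact (summable_extend_zero hf).mpr ((lp.memℓp x).summable (by rw [two_toReal]; norm_num))⟩
  map_add' x y := by
    apply Subtype.ext
    simp only [AddSubgroup.coe_add]
    exact extend_add hf _ _
  map_smul' c x := by
    apply Subtype.ext
    have : ⇑(c • x) = c • ⇑x := lp.coeFn_smul c x
    simp only [RingHom.id_apply]
    rw [this, extend_smul hf]
    rfl
  norm_map' x := by
    have hp : 0 < (2 : ℝ≥0∞).toReal := by rw [two_toReal]; norm_num
    rw [lp.norm_eq_tsum_rpow hp, lp.norm_eq_tsum_rpow hp]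
    congr 1
    have h1 : (fun j => ‖extend f (⇑x) 0 j‖ ^ (2 : ℝ≥0∞).toReal)
        = extend f (fun i => ‖x i‖ ^ (2 : ℝ≥0∞).toReal) (0 : ι → ℝ) := by
      funext j; exact extend_norm_rpow hf _ _ hp j
    calc ∑' j, ‖(⟨extend f (⇑x) 0, _⟩ : lp (fun _ : ι => ℂ) 2) j‖ ^ (2 : ℝ≥0∞).toReal
        = ∑' j, extend f (fun i => ‖x i‖ ^ (2 : ℝ≥0∞).toReal) (0 : ι → ℝ) j :=
          tsum_congr fun j => congrFun h1 j
      _ = ∑' i, ‖x i‖ ^ (2 : ℝ≥0∞).toReal := tsum_extend_zero hf _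

theorem shiftIso_apply {f : ι → ι} (hf : Injective f) (x : lp (fun _ : ι => ℂ) 2) (j : ι) :
    (shiftIso hf x) j = extend f (⇑x) 0 j := by
  rfl

end Stmt11Aux

end

noncomputable section

namespace Stmt11Aux

open Function ENNReal Metric unitInterval

variable {ι : Type*}

/-- shift on indices: moves `e n` to `e (n+1)`, fixes everything else. -/
def ff (e : ℕ ↪ ι) : ι → ι := fun j =>
  letI := Classical.propDecidable
  if h : ∃ n, e n = j then e (h.choose + 1) else j

theorem ff_def (e : ℕ ↪ ι) (j : ι) :
    ff e j = letI := Classical.propDecidable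
      if h : ∃ n, e n = j then e (h.choose + 1) else j := rfl

theorem ff_e (e : ℕ ↪ ι) (n : ℕ) : ff e (e n) = e (n + 1) := by
  have h : ∃ m, e m = e n := ⟨n, rfl⟩
  rw [ff_def, dif_pos h, e.injective h.choose_spec]

theorem ff_not (e : ℕ ↪ ι) {j : ι} (h : j ∉ Set.range e) : ff e j = j := by
  rw [ff_def, dif_neg (by simpa [Set.mem_range] using h)]

theorem ff_inj (e : ℕ ↪ ι) : Injective (ff e) := by
  intro a b hab
  rcases em (∃ n, e n = a) with ⟨n, rfl⟩ | ha <;> rcases em (∃ m, e m = b) with ⟨m, rfl⟩ | hb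
  · rw [ff_e, ff_e] at hab
    obtain rfl : n = m := by simpa using e.injective hab
    rfl
  · rw [ff_e, ff_not e (by simpa [Set.mem_range] using hb)] at hab
    exact (hb ⟨n + 1, hab⟩).elim
  · rw [ff_not e (by simpa [Set.mem_range] using ha), ff_e] at hab
    exact (ha ⟨m + 1, hab.symm⟩).elim
  · rwa [ff_not e (by simpa [Set.mem_range] using ha),
      ff_not e (by simpa [Set.mem_range] using hb)] at hab

theorem ff_zero_not_mem (e : ℕ ↪ ι) : ¬ ∃ j, ff e j = e 0 := by
  rintro ⟨j, hj⟩
  rcases em (∃ n, e n = j) with ⟨n, rfl⟩ | h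
  · rw [ff_e] at hj
    simpa using e.injective hj
  · rw [ff_not e (by simpa [Set.mem_range] using h)] at hj
    exact h ⟨0, hj.symm⟩

end Stmt11Aux

end

noncomputable section

namespace Stmt11Aux

open Function ENNReal Metric unitInterval

variable {ι : Type*}

set_option maxHeartbeats 1000000 in
theorem contractible_sphere_lp (e : ℕ ↪ ι) :
    ContractibleSpace (sphere (0 : lp (fun _ : ι => ℂ) 2) 1) := by
  classical
  set E2 := lp (fun _ : ι => ℂ) 2 with hE2
  have hf := ff_inj e
  set S := shiftIso hf with hS
  have hSmem : ∀ x : sphere (0 : E2) 1, S (x : E2) ∈ sphere (0 : E2) 1 := by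
    intro x
    rw [mem_sphere_zero_iff_norm, S.norm_map]
    exact mem_sphere_zero_iff_norm.mp x.2
  set Fs : C(sphere (0 : E2) 1, sphere (0 : E2) 1) :=
    ⟨fun x => ⟨S (x : E2), hSmem x⟩,
      (S.continuous.comp continuous_subtype_val).subtype_mk _⟩ with hFs
  have hp2 : (0 : ℝ) < (2 : ℝ≥0∞).toReal := by rw [two_toReal]; norm_num
  have hpnorm : ‖lp.single (E := fun _ : ι => ℂ) 2 (e 0) (1 : ℂ)‖ = 1 := by
    have := lp.norm_single (E := fun _ : ι => ℂ) (p := 2) (by norm_num) (e 0) (1 : ℂ)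
    simpa using this
  set p : sphere (0 : E2) 1 :=
    ⟨lp.single 2 (e 0) 1, by rw [mem_sphere_zero_iff_norm]; exact hpnorm⟩ with hp
  rw [contractible_iff_id_nullhomotopic]
  refine ⟨p, ?_⟩
  have hSnz : ∀ x : sphere (0 : E2) 1, S (x : E2) ≠ 0 := by
    intro x hc
    have := congrArg norm hc
    rw [S.norm_map, mem_sphere_zero_iff_norm.mp x.2] at this
    simp at this
  have hS0 : ∀ x : sphere (0 : E2) 1, S (x : E2) (e 0) = 0 := by
    intro x
    rw [hS, shiftIso_apply hf, Function.extend_apply' _ _ _ (ff_zero_not_mem e)]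
    rfl
  have h1 : (ContinuousMap.id (sphere (0 : E2) 1)).Homotopic Fs := by
    apply homotopic_of_interp_ne_zero
    intro t x hzero
    by_cases ht : (t : ℝ) = 1
    · rw [ht] at hzero
      simp only [sub_self, zero_smul, one_smul, zero_add] at hzero
      exact hSnz x hzero
    · have ha : 0 < 1 - (t : ℝ) := by
        have h2 := t.2.2
        have : (t : ℝ) < 1 := lt_of_le_of_ne h2 ht
        linarith
      have hzero' : (1 - (t : ℝ)) • (x : E2) + (t : ℝ) • S (x : E2) = 0 := by
        rw [hFs] at hzero
        exact hzero
      have hcomp : ∀ j, (1 - (t : ℝ)) • ((x : E2) j) + (t : ℝ) • (S (x : E2) j) = (0 : ℂ) := by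
        intro j
        have h0 : ((1 - (t : ℝ)) • (x : E2) + (t : ℝ) • S (x : E2)) j = (0 : E2) j := by
          rw [hzero']
        rw [lp.coeFn_add, Pi.add_apply, lp.coeFn_smul, lp.coeFn_smul, Pi.smul_apply,
          Pi.smul_apply, lp.coeFn_zero, Pi.zero_apply] at h0
        exact h0
      have hrange : ∀ n : ℕ, (x : E2) (e n) = 0 := by
        intro n
        induction n with
        | zero =>
          have hc := hcomp (e 0)
          rw [hS0 x, smul_zero, add_zero, smul_eq_zero] at hc
          exact hc.resolve_left ha.ne'
        | succ n ih =>
          have hc := hcomp (e (n + 1))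
          have hSa : S (x : E2) (e (n + 1)) = (x : E2) (e n) := by
            rw [hS, shiftIso_apply hf, ← ff_e e n, hf.extend_apply]
          rw [hSa, ih, smul_zero, add_zero, smul_eq_zero] at hc
          exact hc.resolve_left ha.ne'
      have hall : ∀ j, (x : E2) j = 0 := by
        intro j
        rcases em (j ∈ Set.range e) with ⟨n, rfl⟩ | hj
        · exact hrange n
        · have hSa : S (x : E2) j = (x : E2) j := by
            conv_lhs => rw [hS, shiftIso_apply hf, ← ff_not e hj, hf.extend_apply]
          have hc := hcomp j
          rw [hSa, ← add_smul, sub_add_cancel, one_smul] at hc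
          exact hc
      have hx0 : (x : E2) = 0 := lp.ext (funext hall)
      have := mem_sphere_zero_iff_norm.mp x.2
      rw [hx0] at this
      simp at this
  have h2 : Fs.Homotopic (ContinuousMap.const _ p) := by
    apply homotopic_of_interp_ne_zero
    intro t x hzero
    by_cases ht : (t : ℝ) = 0
    · rw [ht] at hzero
      simp only [sub_zero, one_smul, zero_smul, add_zero] at hzero
      exact hSnz x hzero
    · have hzero' : (1 - (t : ℝ)) • S (x : E2) + (t : ℝ) • (p : E2) = 0 := by
        rw [hFs] at hzero
        exact hzero
      have h0 : ((1 - (t : ℝ)) • S (x : E2) + (t : ℝ) • (p : E2)) (e 0) = (0 : E2) (e 0) := by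
        rw [hzero']
      have hps : ((p : E2) : ι → ℂ) (e 0) = 1 := by
        rw [hp]
        exact lp.single_apply_self (E := fun _ : ι => ℂ) 2 (e 0) (1 : ℂ)
      have hFse : S (x : E2) (e 0) = 0 := hS0 x
      rw [lp.coeFn_add, Pi.add_apply, lp.coeFn_smul, lp.coeFn_smul, Pi.smul_apply,
        Pi.smul_apply, lp.coeFn_zero, Pi.zero_apply, hps, hFse, smul_zero, zero_add,
        smul_eq_zero] at h0
      rcases h0 with h0 | h0
      · exact ht h0
      · exact one_ne_zero h0
  exact h1.trans h2

end Stmt11Aux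

end

noncomputable section

namespace Stmt11Aux

open Metric

/-- A linear isometry equivalence restricts to a homeomorphism of unit spheres. -/
def sphereHomeo {H E : Type*} [NormedAddCommGroup H] [NormedAddCommGroup E]
    [NormedSpace ℂ H] [NormedSpace ℂ E] (L : H ≃ₗᵢ[ℂ] E) :
    sphere (0 : H) 1 ≃ₜ sphere (0 : E) 1 where
  toFun x := ⟨L x, by
    rw [mem_sphere_zero_iff_norm, L.norm_map]
    exact mem_sphere_zero_iff_norm.mp x.2⟩
  invFun y := ⟨L.symm y, by
    rw [mem_sphere_zero_iff_norm, L.symm.norm_map]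
    exact mem_sphere_zero_iff_norm.mp y.2⟩
  left_inv x := Subtype.ext (L.symm_apply_apply x)
  right_inv y := Subtype.ext (L.apply_symm_apply y)
  continuous_toFun := by exact Continuous.subtype_mk (L.isometry.continuous.comp continuous_subtype_val) _
  continuous_invFun := by exact Continuous.subtype_mk (L.symm.isometry.continuous.comp continuous_subtype_val) _

end Stmt11Aux

end

/-- The unit sphere of an infinite-dimensional complex Hilbert space is
contractible. -/
theorem stmt11 {H : Type*} [NormedAddCommGroup H] [InnerProductSpace ℂ H]
    [CompleteSpace H] (hinf : ¬ FiniteDimensional ℂ H) :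
    ContractibleSpace (Metric.sphere (0 : H) 1) := by
  obtain ⟨w, b, hb⟩ := exists_hilbertBasis ℂ H
  -- w is infinite
  have hwinf : w.Infinite := by
    by_contra hw
    rw [Set.not_infinite] at hw
    have hsp := b.dense_span
    rw [hb, Subtype.range_coe] at hsp
    have hfd : FiniteDimensional ℂ (Submodule.span ℂ w) := FiniteDimensional.span_of_finite ℂ hw
    have hclosed : IsClosed (↑(Submodule.span ℂ w) : Set H) :=
      Submodule.closed_of_finiteDimensional _
    have htop : Submodule.span ℂ w = ⊤ := by
      rw [← hclosed.submodule_topologicalClosure_eq]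
      exact hsp
    rw [htop] at hfd
    exact hinf (Module.Finite.equiv (Submodule.topEquiv (R := ℂ) (M := H)))
  haveI : Infinite ↥w := Set.infinite_coe_iff.mpr hwinf
  have e : ℕ ↪ ↥w := Infinite.natEmbedding ↥w
  haveI := Stmt11Aux.contractible_sphere_lp e
  exact (Stmt11Aux.sphereHomeo b.repr).contractibleSpace
end

section
/- Let A be a C*-algebra and ω a state excised by a decreasing sequence of projections (P_n) with ω(P_n) = 1 for all n, i.e., ‖P_n a P_n - ω(a) P_n‖ → 0 for every a ∈ A. If ψ is any state on A such that ψ(P_n) = 1 for all n, then ψ = ω. -/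
open Filter Topology

/-- A state on a unital C*-algebra: a linear functional which is `1` at the unit
and takes nonnegative real values on positive elements `a* a`. -/
def IsState {A : Type*} [Ring A] [StarRing A] [Algebra ℂ A] (φ : A →ₗ[ℂ] ℂ) : Prop :=
  φ 1 = 1 ∧ ∀ a : A, 0 ≤ (φ (star a * a)).re ∧ (φ (star a * a)).im = 0

section Helpers

variable {A : Type*} [CStarAlgebra A]

lemma isState_star_apply (φ : A →ₗ[ℂ] ℂ) (hφ : IsState φ) (y : A) :
    φ (star y) = starRingEnd ℂ (φ y) := by
  have h1 := (hφ.2 (1 + y)).2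
  have h2 := (hφ.2 (1 + Complex.I • y)).2
  have hyy := (hφ.2 y).2
  have e1 : star (1 + y) * (1 + y) = 1 + y + star y + star y * y := by
    rw [star_add, star_one]; noncomm_ring
  have e2 : star (1 + Complex.I • y) * (1 + Complex.I • y)
      = 1 + Complex.I • y - Complex.I • star y + star y * y := by
    rw [star_add, star_one, star_smul, Complex.star_def, Complex.conj_I]
    simp only [mul_add, add_mul, one_mul, mul_one, neg_smul, smul_mul_assoc, mul_smul_comm,
      smul_smul, Complex.I_mul_I, neg_mul, neg_neg, one_smul, smul_neg]
    match_scalars <;> simp [Complex.I_sq]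
  rw [e1] at h1
  rw [e2] at h2
  simp only [map_add, map_sub, map_smul, smul_eq_mul, hφ.1, Complex.add_im, Complex.sub_im,
    Complex.one_im, Complex.mul_im, Complex.I_re, Complex.I_im, hyy, zero_mul, one_mul,
    zero_add, add_zero] at h1 h2
  apply Complex.ext
  · rw [Complex.conj_re]; linarith
  · rw [Complex.conj_im]; linarith

lemma isState_mul_eq_zero (φ : A →ₗ[ℂ] ℂ) (hφ : IsState φ) {q : A} (hq : star q = q)
    (hq0 : φ (q * q) = 0) (z : A) : φ (z * q) = 0 := by
  set α := φ (z * q) with hα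
  set S := (φ (z * star z)).re with hS
  have hS0 : 0 ≤ S := by simpa using (hφ.2 (star z)).1
  have hSim : (φ (z * star z)).im = 0 := by simpa using (hφ.2 (star z)).2
  set ε : ℝ := (S + 1)⁻¹ with hε
  have hε0 : 0 < ε := by positivity
  set t : ℂ := -(ε : ℂ) * α with ht
  have hx := (hφ.2 (t • star z + q)).1
  have e : star (t • star z + q) * (t • star z + q)
      = (starRingEnd ℂ t * t) • (z * star z) + (starRingEnd ℂ t) • (z * q)
        + t • (q * star z) + q * q := by
    rw [star_add, star_smul, star_star, hq, Complex.star_def]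
    simp only [mul_add, add_mul, smul_mul_assoc, mul_smul_comm, smul_smul]
    module
  rw [e] at hx
  have hqsz : φ (q * star z) = starRingEnd ℂ α := by
    have h := isState_star_apply φ hφ (z * q)
    rw [star_mul, hq] at h
    exact h
  have hct : starRingEnd ℂ t = -(ε : ℂ) * starRingEnd ℂ α := by
    simp [ht, Complex.conj_ofReal]
  have e1 : starRingEnd ℂ t * t = ((ε ^ 2 * Complex.normSq α : ℝ) : ℂ) := by
    rw [hct, ht]
    have h : (-(ε:ℂ) * starRingEnd ℂ α) * (-(ε:ℂ) * α)
        = ((ε:ℂ) * (ε:ℂ)) * (α * starRingEnd ℂ α) := by ring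
    rw [h, Complex.mul_conj]; push_cast; ring
  have e2 : starRingEnd ℂ t * α = -(((ε * Complex.normSq α : ℝ)) : ℂ) := by
    rw [hct]
    have h : (-(ε:ℂ) * starRingEnd ℂ α) * α = -((ε:ℂ) * (α * starRingEnd ℂ α)) := by ring
    rw [h, Complex.mul_conj]; push_cast; ring
  have e3 : t * starRingEnd ℂ α = -(((ε * Complex.normSq α : ℝ)) : ℂ) := by
    rw [ht]
    have h : (-(ε:ℂ) * α) * starRingEnd ℂ α = -((ε:ℂ) * (α * starRingEnd ℂ α)) := by ring
    rw [h, Complex.mul_conj]; push_cast; ring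
  rw [map_add, map_add, map_add, map_smul, map_smul, map_smul, hq0, hqsz, ← hα,
    smul_eq_mul, smul_eq_mul, smul_eq_mul, e1, e2, e3] at hx
  have hx' : ε * Complex.normSq α + ε * Complex.normSq α
      ≤ ε ^ 2 * Complex.normSq α * S := by
    simpa [Complex.add_re, Complex.sub_re, Complex.mul_re, Complex.ofReal_re,
      Complex.ofReal_im, ← Complex.ofReal_pow, hSim, ← hS] using hx
  have hεS : ε * S ≤ 1 := by
    rw [hε]
    rw [inv_mul_le_iff₀ (by linarith : (0:ℝ) < S + 1)]
    linarith
  have hnα : Complex.normSq α ≤ 0 := by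
    nlinarith [mul_nonneg hε0.le (Complex.normSq_nonneg α), Complex.normSq_nonneg α, hx', hεS]
  exact Complex.normSq_eq_zero.mp (le_antisymm hnα (Complex.normSq_nonneg α))

variable [PartialOrder A] [StarOrderedRing A]

lemma isState_abs_apply_le (φ : A →ₗ[ℂ] ℂ) (hφ : IsState φ) (y : A) :
    ‖φ y‖ ≤ ‖y‖ := by
  have hpos : ∀ x : A, 0 ≤ x → 0 ≤ (φ x).re ∧ (φ x).im = 0 := by
    intro x hx
    have h := hφ.2 (CFC.sqrt x)
    rwa [(IsSelfAdjoint.of_nonneg (CFC.sqrt_nonneg x)).star_eq, CFC.sqrt_mul_sqrt_self x hx] at h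
  have hb : (φ (star y * y)).re ≤ ‖y‖ ^ 2 := by
    have hp := hpos _ (sub_nonneg.2 (CStarAlgebra.star_mul_le_algebraMap_norm_sq (a := y)))
    have halg : φ (algebraMap ℝ A (‖y‖ ^ 2)) = ((‖y‖ ^ 2 : ℝ) : ℂ) := by
      rw [IsScalarTower.algebraMap_apply ℝ ℂ A, Algebra.algebraMap_eq_smul_one, map_smul,
        hφ.1, smul_eq_mul, mul_one, Complex.coe_algebraMap]
    have h := hp.1
    rw [map_sub, halg] at h
    simpa [Complex.sub_re, Complex.ofReal_re, ← Complex.ofReal_pow] using h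
  set c := φ y with hc
  have hx := (hφ.2 (y - c • 1)).1
  have e : star (y - c • 1) * (y - c • 1)
      = star y * y - c • star y - (starRingEnd ℂ c) • y + (starRingEnd ℂ c * c) • (1 : A) := by
    rw [star_sub, star_smul, star_one, Complex.star_def]
    simp only [sub_mul, mul_sub, smul_mul_assoc, mul_smul_comm, smul_smul, mul_one, one_mul]
    module
  rw [e] at hx
  have hsy : φ (star y) = starRingEnd ℂ c := isState_star_apply φ hφ y
  rw [map_add, map_sub, map_sub, map_smul, map_smul, map_smul, hφ.1, hsy, smul_eq_mul,
    smul_eq_mul, smul_eq_mul, mul_one, ← hc] at hx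
  have hrw : φ (star y * y) - c * starRingEnd ℂ c - starRingEnd ℂ c * c + starRingEnd ℂ c * c
      = φ (star y * y) - ((Complex.normSq c : ℝ) : ℂ) := by
    rw [Complex.mul_conj]; ring
  rw [hrw] at hx
  have hcs : Complex.normSq c ≤ (φ (star y * y)).re := by simpa using hx
  have habs : ‖φ y‖ ^ 2 ≤ ‖y‖ ^ 2 := by
    rw [← hc, Complex.sq_norm]; exact hcs.trans hb
  nlinarith [norm_nonneg (φ y), norm_nonneg y]

end Helpers

/-- Suppose a state `ω` on a C*-algebra is excised by a decreasing sequence of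
projections `(Pₙ)` with `ω(Pₙ) = 1`, i.e. `‖Pₙ a Pₙ - ω(a) Pₙ‖ → 0` for every `a`.
If `ψ` is any state with `ψ(Pₙ) = 1` for all `n`, then `ψ = ω`. -/
theorem stmt16 {A : Type*} [NormedRing A] [StarRing A] [CStarRing A]
    [NormedAlgebra ℂ A] [StarModule ℂ A] [CompleteSpace A]
    (ω ψ : A →ₗ[ℂ] ℂ) (hω : IsState ω) (hψ : IsState ψ)
    (P : ℕ → A)
    (hPstar : ∀ n, star (P n) = P n) (hPidem : ∀ n, P n * P n = P n)
    (hPdec : ∀ n, P n * P (n + 1) = P (n + 1))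
    (hωP : ∀ n, ω (P n) = 1)
    (hexc : ∀ a : A,
      Tendsto (fun n => ‖P n * a * P n - ω a • P n‖) atTop (𝓝 0))
    (hψP : ∀ n, ψ (P n) = 1) :
    ψ = ω := by
  letI : CStarAlgebra A := {}
  letI : PartialOrder A := CStarAlgebra.spectralOrder A
  letI : StarOrderedRing A := CStarAlgebra.spectralOrderedRing A
  have hqstar : ∀ n, star ((1 : A) - P n) = 1 - P n := fun n => by
    rw [star_sub, star_one, hPstar]
  have hq0 : ∀ n, ψ (((1 : A) - P n) * (1 - P n)) = 0 := by
    intro n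
    have h : ((1 : A) - P n) * (1 - P n) = 1 - P n := by
      rw [sub_mul, one_mul, mul_sub, mul_one, hPidem n]
      abel
    rw [h, map_sub, hψ.1, hψP n, sub_self]
  have hr : ∀ n (z : A), ψ (z * P n) = ψ z := by
    intro n z
    have h0 := isState_mul_eq_zero ψ hψ (hqstar n) (hq0 n) z
    have h : z * ((1 : A) - P n) = z - z * P n := by rw [mul_sub, mul_one]
    rw [h, map_sub, sub_eq_zero] at h0
    exact h0.symm
  have hl : ∀ n (z : A), ψ (P n * z) = ψ z := by
    intro n z
    have h0 := isState_mul_eq_zero ψ hψ (hqstar n) (hq0 n) (star z)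
    have h1 : ψ (((1 : A) - P n) * z) = 0 := by
      have h := isState_star_apply ψ hψ (star z * ((1 : A) - P n))
      rw [h0, star_mul, hqstar n, star_star] at h
      simpa using h
    have h : ((1 : A) - P n) * z = z - P n * z := by rw [sub_mul, one_mul]
    rw [h, map_sub, sub_eq_zero] at h1
    exact h1.symm
  have key : ∀ a : A, ψ a = ω a := by
    intro a
    have hbound : ∀ n, ‖ψ a - ω a‖ ≤ ‖P n * a * P n - ω a • P n‖ := by
      intro n
      have h1 : ψ (P n * a * P n - ω a • P n) = ψ a - ω a := by
        rw [map_sub, map_smul, mul_assoc, hl n (a * P n), hr n a, smul_eq_mul, hψP n, mul_one]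
      calc ‖ψ a - ω a‖ = ‖ψ (P n * a * P n - ω a • P n)‖ := by rw [h1]
        _ ≤ ‖P n * a * P n - ω a • P n‖ := isState_abs_apply_le ψ hψ _
    have h0 : ‖ψ a - ω a‖ ≤ 0 := ge_of_tendsto' (hexc a) hbound
    have := le_antisymm h0 (norm_nonneg _)
    rwa [norm_eq_zero, sub_eq_zero] at this
  exact LinearMap.ext key
end
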